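/- The period function T(h) of the circular Sitnikov problem is strictly increasing on (−2, 0): dT/dh > 0 for all h ∈ (−2, 0). -/

import Mathlib

/-
With m = k² = (2 + h)/4 and b = 1 - 2mt², the identity 2(1 - mt²) - 1 = b collapses the elliptic
combination to a single integral
  T(h) = √2 ∫₀¹ (b + b⁻¹) / (2(1 - 2m)√(1 - mt²)) · dt/√(1 - t²).
For 0 ≤ m < 1/2 every factor of this kernel is positive and nondecreasing in m (b + b⁻¹ decreases
on b ∈ (0, 1]), and 1/(1 - 2m) is strictly increasing, so the m-derivative of the kernel is
positive. Differentiation under the integral sign is legitimate because 1/√(1 - t²), the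
derivative of arcsin, is integrable and the m-derivative of the kernel is continuous, hence
bounded, on a compact neighbourhood.
-/

open Real Set Filter

/-- Complete elliptic integral of the first kind. -/
noncomputable def ellipticK (k : ℝ) : ℝ :=
  ∫ t in (0 : ℝ)..1, 1 / (Real.sqrt (1 - t^2) * Real.sqrt (1 - k^2 * t^2))

/-- Complete elliptic integral of the second kind. -/
noncomputable def ellipticE (k : ℝ) : ℝ :=
  ∫ t in (0 : ℝ)..1, Real.sqrt (1 - k^2 * t^2) / Real.sqrt (1 - t^2)

/-- Complete elliptic integral of the third kind. -/
noncomputable def ellipticPi (n k : ℝ) : ℝ :=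
  ∫ t in (0 : ℝ)..1,
    1 / ((1 - n * t^2) * Real.sqrt (1 - t^2) * Real.sqrt (1 - k^2 * t^2))

/-- The period function of the circular Sitnikov problem. -/
noncomputable def sitnikovT (h : ℝ) : ℝ :=
  let k := Real.sqrt (2 + h) / 2
  (Real.sqrt 2 / (2 * (1 - 2 * k^2))) *
    (2 * ellipticE k - ellipticK k + ellipticPi (2 * k^2) k)

open MeasureTheory intervalIntegral Metric Function Topology
open scoped Interval

theorem one_sub_mul_sq_pos {c t : ℝ} (hc : c < 1) (ht : t ^ 2 ≤ 1) : 0 < 1 - c * t ^ 2 := by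
  rcases le_or_gt 0 c with hc₀ | hc₀
  · nlinarith
  · nlinarith [sq_nonneg t]

theorem sq_le_one_of_mem_uIcc_zero_one {t : ℝ} (ht : t ∈ [[0, 1]]) : t ^ 2 ≤ 1 := by
  rw [uIcc_of_le zero_le_one] at ht
  nlinarith [ht.1, ht.2]

theorem intervalIntegrable_one_div_sqrt_one_sub_sq :
    IntervalIntegrable (fun t : ℝ => 1 / √(1 - t ^ 2)) volume (-1) 1 := by
  refine intervalIntegrable_deriv_of_nonneg continuous_arcsin.continuousOn
    (fun x hx => ?_) (fun x _ => by positivity)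
  norm_num at hx
  exact hasDerivAt_arcsin (by linarith [hx.1]) (by linarith [hx.2])

theorem intervalIntegrable_one_div_sqrt_one_sub_sq_zero_one :
    IntervalIntegrable (fun t : ℝ => 1 / √(1 - t ^ 2)) volume 0 1 :=
  intervalIntegrable_one_div_sqrt_one_sub_sq.mono_set
    (uIcc_subset_uIcc (by norm_num [mem_uIcc]) right_mem_uIcc)

theorem hasDerivAt_integral_mul_of_continuousOn {f f' : ℝ → ℝ → ℝ} {w : ℝ → ℝ}
    {a b x₀ ε : ℝ} (hε : 0 < ε) (hw : IntervalIntegrable w volume a b)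
    (hf : ∀ x ∈ ball x₀ ε, ContinuousOn (f x) [[a, b]])
    (hf' : ContinuousOn (uncurry f') (closedBall x₀ ε ×ˢ [[a, b]]))
    (hderiv : ∀ x ∈ ball x₀ ε, ∀ t ∈ [[a, b]], HasDerivAt (f · t) (f' x t) x) :
    HasDerivAt (fun x => ∫ t in a..b, f x t * w t) (∫ t in a..b, f' x₀ t * w t) x₀ := by
  obtain ⟨C, hC⟩ :=
    ((isCompact_closedBall x₀ ε).prod isCompact_uIcc).exists_bound_of_continuousOn hf'
  have hf'_x₀ : ContinuousOn (f' x₀) [[a, b]] := hf'.uncurry_left x₀ (mem_closedBall_self hε.le)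
  refine (hasDerivAt_integral_of_dominated_loc_of_deriv_le (ball_mem_nhds x₀ hε)
    (eventually_of_mem (ball_mem_nhds x₀ hε) fun x hx =>
      (intervalIntegrable_iff.1 (hw.continuousOn_mul (hf x hx))).aestronglyMeasurable)
    (hw.continuousOn_mul (hf x₀ (mem_ball_self hε)))
    (intervalIntegrable_iff.1 (hw.continuousOn_mul hf'_x₀)).aestronglyMeasurable
    (ae_of_all _ fun t ht x hx => ?_) (hw.norm.const_mul C)
    (ae_of_all _ fun t ht x hx => (hderiv x hx t (uIoc_subset_uIcc ht)).mul_const (w t))).2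
  rw [norm_mul]
  exact mul_le_mul_of_nonneg_right
    (hC (x, t) ⟨ball_subset_closedBall hx, uIoc_subset_uIcc ht⟩) (norm_nonneg _)

noncomputable def sitnikovKernel (m t : ℝ) : ℝ :=
  ((1 - 2 * m * t ^ 2) + (1 - 2 * m * t ^ 2)⁻¹) / (2 * (1 - 2 * m) * √(1 - m * t ^ 2))

/-- The `m`-derivative of `sitnikovKernel = N / D`, written as `(N' + N * (-D' / D)) / D` so that
every summand is visibly nonnegative for `0 ≤ m < 1/2`. -/
noncomputable def sitnikovKernelDeriv (m t : ℝ) : ℝ :=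
  (2 * t ^ 2 * (1 - (1 - 2 * m * t ^ 2) ^ 2) / (1 - 2 * m * t ^ 2) ^ 2
      + ((1 - 2 * m * t ^ 2) + (1 - 2 * m * t ^ 2)⁻¹)
        * (2 / (1 - 2 * m) + t ^ 2 / (2 * (1 - m * t ^ 2))))
    / (2 * (1 - 2 * m) * √(1 - m * t ^ 2))

noncomputable def sitnikovIntegral (m : ℝ) : ℝ :=
  ∫ t in (0 : ℝ)..1, sitnikovKernel m t * (1 / √(1 - t ^ 2))

section kernel

variable {m t : ℝ}

theorem sitnikovKernel_factors_pos (hm : m < 1 / 2) (ht : t ^ 2 ≤ 1) :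
    0 < 1 - 2 * m * t ^ 2 ∧ 0 < 1 - m * t ^ 2 ∧ 0 < 1 - 2 * m :=
  ⟨one_sub_mul_sq_pos (by linarith) ht, one_sub_mul_sq_pos (by linarith) ht, by linarith⟩

theorem hasDerivAt_sitnikovKernel (hm : m < 1 / 2) (ht : t ^ 2 ≤ 1) :
    HasDerivAt (sitnikovKernel · t) (sitnikovKernelDeriv m t) m := by
  obtain ⟨hb, hc, ha⟩ := sitnikovKernel_factors_pos hm ht
  have hB : HasDerivAt (fun m => 1 - 2 * m * t ^ 2) (-(2 * t ^ 2)) m := by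
    simpa using ((hasDerivAt_id m).const_mul 2 |>.mul_const (t ^ 2)).const_sub 1
  have hC : HasDerivAt (fun m => 1 - m * t ^ 2) (-t ^ 2) m := by
    simpa using ((hasDerivAt_id m).mul_const (t ^ 2)).const_sub 1
  have hA : HasDerivAt (fun m => 2 * (1 - 2 * m)) (-(2 * 2)) m := by
    simpa using (((hasDerivAt_id m).const_mul 2).const_sub 1).const_mul 2
  have hN : HasDerivAt (fun m => (1 - 2 * m * t ^ 2) + (1 - 2 * m * t ^ 2)⁻¹) _ m :=
    hB.add (hB.inv hb.ne')
  have hD : HasDerivAt (fun m => 2 * (1 - 2 * m) * √(1 - m * t ^ 2)) _ m := hA.mul (hC.sqrt hc.ne')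
  refine (hN.div hD (by positivity)).congr_deriv ?_
  unfold sitnikovKernelDeriv
  have hs : √(1 - m * t ^ 2) ≠ 0 := by positivity
  have hsq := sq_sqrt hc.le
  set s := √(1 - m * t ^ 2)
  set b := 1 - 2 * m * t ^ 2
  rw [← hsq]
  field_simp
  ring

theorem sitnikovKernelDeriv_pos (hm₀ : 0 ≤ m) (hm : m < 1 / 2) (ht : t ^ 2 ≤ 1) :
    0 < sitnikovKernelDeriv m t := by
  obtain ⟨hb, hc, ha⟩ := sitnikovKernel_factors_pos hm ht
  have hb_le_one : 0 ≤ 1 - (1 - 2 * m * t ^ 2) ^ 2 := by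
    have : 0 ≤ 2 * m * t ^ 2 := by positivity
    nlinarith
  have hlog_deriv : 0 < 2 / (1 - 2 * m) + t ^ 2 / (2 * (1 - m * t ^ 2)) := by positivity
  unfold sitnikovKernelDeriv
  positivity

theorem continuousOn_sitnikovKernel (hm : m < 1 / 2) :
    ContinuousOn (sitnikovKernel m) {t | t ^ 2 ≤ 1} := by
  intro t ht
  obtain ⟨hb, hc, ha⟩ := sitnikovKernel_factors_pos hm ht
  refine ContinuousAt.continuousWithinAt ?_
  unfold sitnikovKernel
  fun_prop (disch := positivity)

theorem continuousOn_sitnikovKernelDeriv :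
    ContinuousOn (uncurry sitnikovKernelDeriv) (Iio (1 / 2) ×ˢ {t | t ^ 2 ≤ 1}) := by
  rintro ⟨m, t⟩ ⟨hm, ht⟩
  obtain ⟨hb, hc, ha⟩ := sitnikovKernel_factors_pos hm ht
  refine ContinuousAt.continuousWithinAt ?_
  unfold sitnikovKernelDeriv
  fun_prop (disch := positivity)

theorem hasDerivAt_sitnikovIntegral (hm : m < 1 / 2) :
    HasDerivAt sitnikovIntegral
      (∫ t in (0 : ℝ)..1, sitnikovKernelDeriv m t * (1 / √(1 - t ^ 2))) m := by
  have hε : 0 < (1 / 2 - m) / 2 := by linarith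
  have hball : closedBall m ((1 / 2 - m) / 2) ⊆ Iio (1 / 2) := fun x hx => by
    rw [mem_closedBall, Real.dist_eq, abs_le] at hx
    exact mem_Iio.2 (by linarith [hx.2])
  have hI : [[(0 : ℝ), 1]] ⊆ {t | t ^ 2 ≤ 1} := fun t ht => sq_le_one_of_mem_uIcc_zero_one ht
  exact hasDerivAt_integral_mul_of_continuousOn hε
    intervalIntegrable_one_div_sqrt_one_sub_sq_zero_one
    (fun x hx => (continuousOn_sitnikovKernel (hball (ball_subset_closedBall hx))).mono hI)
    (continuousOn_sitnikovKernelDeriv.mono (prod_mono hball hI))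
    (fun x hx t ht => hasDerivAt_sitnikovKernel (hball (ball_subset_closedBall hx)) (hI ht))

theorem integral_sitnikovKernelDeriv_pos (hm₀ : 0 ≤ m) (hm : m < 1 / 2) :
    0 < ∫ t in (0 : ℝ)..1, sitnikovKernelDeriv m t * (1 / √(1 - t ^ 2)) := by
  have hcont : ContinuousOn (sitnikovKernelDeriv m) [[0, 1]] :=
    (continuousOn_sitnikovKernelDeriv.uncurry_left m hm).mono
      fun t ht => sq_le_one_of_mem_uIcc_zero_one ht
  refine intervalIntegral_pos_of_pos_on
    (intervalIntegrable_one_div_sqrt_one_sub_sq_zero_one.continuousOn_mul hcont)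
    (fun t ht => ?_) zero_lt_one
  have hs : 0 < 1 - t ^ 2 := by nlinarith [ht.1, ht.2]
  have := sitnikovKernelDeriv_pos hm₀ hm (by linarith : t ^ 2 ≤ 1)
  positivity

end kernel

theorem elliptic_combination_eq_sitnikovIntegral {k : ℝ} (hk : 2 * k ^ 2 < 1) :
    √2 / (2 * (1 - 2 * k ^ 2)) * (2 * ellipticE k - ellipticK k + ellipticPi (2 * k ^ 2) k)
      = √2 * sitnikovIntegral (k ^ 2) := by
  have hw := intervalIntegrable_one_div_sqrt_one_sub_sq_zero_one
  have hfactors : ∀ t ∈ [[(0 : ℝ), 1]],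
      0 < 1 - 2 * k ^ 2 * t ^ 2 ∧ 0 < 1 - k ^ 2 * t ^ 2 ∧ 0 < 1 - 2 * k ^ 2 := fun t ht =>
    sitnikovKernel_factors_pos (by linarith) (sq_le_one_of_mem_uIcc_zero_one ht)
  have hE : IntervalIntegrable (fun t => √(1 - k ^ 2 * t ^ 2) * (1 / √(1 - t ^ 2))) volume 0 1 :=
    hw.continuousOn_mul (by fun_prop)
  have hK : IntervalIntegrable (fun t => 1 / √(1 - k ^ 2 * t ^ 2) * (1 / √(1 - t ^ 2)))
      volume 0 1 :=
    hw.continuousOn_mul (by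
      fun_prop (disch := exact fun t ht => (sqrt_pos.2 (hfactors t ht).2.1).ne'))
  have hP : IntervalIntegrable
      (fun t => 1 / ((1 - 2 * k ^ 2 * t ^ 2) * √(1 - k ^ 2 * t ^ 2)) * (1 / √(1 - t ^ 2)))
      volume 0 1 :=
    hw.continuousOn_mul (by
      fun_prop (disch := exact fun t ht =>
        (mul_pos (hfactors t ht).1 (sqrt_pos.2 (hfactors t ht).2.1)).ne'))
  have eE : ellipticE k = ∫ t in (0 : ℝ)..1, √(1 - k ^ 2 * t ^ 2) * (1 / √(1 - t ^ 2)) := by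
    simp only [ellipticE, mul_one_div]
  have eK : ellipticK k = ∫ t in (0 : ℝ)..1, 1 / √(1 - k ^ 2 * t ^ 2) * (1 / √(1 - t ^ 2)) := by
    simp only [ellipticK, one_div_mul_one_div, mul_comm]
  have eP : ellipticPi (2 * k ^ 2) k = ∫ t in (0 : ℝ)..1,
      1 / ((1 - 2 * k ^ 2 * t ^ 2) * √(1 - k ^ 2 * t ^ 2)) * (1 / √(1 - t ^ 2)) := by
    simp only [ellipticPi, one_div_mul_one_div, mul_right_comm _ √(1 - _ * _ ^ 2)]
  rw [eE, eK, eP, ← intervalIntegral.integral_const_mul, ← integral_sub (hE.const_mul 2) hK,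
    ← integral_add ((hE.const_mul 2).sub hK) hP, ← intervalIntegral.integral_const_mul,
    sitnikovIntegral, ← intervalIntegral.integral_const_mul]
  refine integral_congr fun t ht => ?_
  obtain ⟨hb, hc, ha⟩ := hfactors t ht
  have hs : √(1 - k ^ 2 * t ^ 2) ≠ 0 := by positivity
  have hsq := sq_sqrt hc.le
  unfold sitnikovKernel
  set s := √(1 - k ^ 2 * t ^ 2)
  rw [show 1 - 2 * k ^ 2 * t ^ 2 = 2 * s ^ 2 - 1 by rw [hsq]; ring] at hb ⊢
  field_simp

theorem sitnikovT_eq_sqrt_two_mul_sitnikovIntegral {h : ℝ} (h₀ : -2 ≤ h) (h₁ : h < 0) :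
    sitnikovT h = √2 * sitnikovIntegral ((2 + h) / 4) := by
  have hk : (√(2 + h) / 2) ^ 2 = (2 + h) / 4 := by
    rw [div_pow, sq_sqrt (by linarith)]
    norm_num
  unfold sitnikovT
  dsimp only
  rw [elliptic_combination_eq_sitnikovIntegral (by rw [hk]; linarith), hk]

theorem stmt_11 : ∀ h ∈ Ioo (-2 : ℝ) 0, 0 < deriv sitnikovT h := by
  rintro h ⟨h₀, h₁⟩
  have hT : sitnikovT =ᶠ[𝓝 h] fun x => √2 * sitnikovIntegral ((2 + x) / 4) :=
    eventually_of_mem (Ioo_mem_nhds h₀ h₁) fun x hx =>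
      sitnikovT_eq_sqrt_two_mul_sitnikovIntegral hx.1.le hx.2
  have hlin : HasDerivAt (fun x => (2 + x) / 4) (1 / 4) h := by
    simpa using ((hasDerivAt_id h).const_add 2).div_const 4
  have hderiv := ((hasDerivAt_sitnikovIntegral (by linarith : (2 + h) / 4 < 1 / 2)).comp h
    hlin |>.const_mul √2).congr_of_eventuallyEq hT
  have hpos := integral_sitnikovKernelDeriv_pos (m := (2 + h) / 4) (by linarith) (by linarith)
  rw [hderiv.deriv]
  positivity
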